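/- Every shifted leading minor of the integer Pascal matrix with entries p_{ij} = C(j-1, i-1) equals 1, i.e., for any r ≥ 1 and j ≥ 0, the determinant of the matrix with entries C(j+l-1, k-1) for 1 ≤ k,l ≤ r equals 1. -/

import Mathlib

/-!
Pascal's rule `C(n+1, k) = C(n, k) + C(n, k-1)` says that the shifted Pascal matrix for `j + 1`
is the one for `j` multiplied on the left by the unipotent lower bidiagonal matrix
`1 + subdiagonalOnes`. For `j = 0` the matrix is upper unitriangular, so by induction every
determinant is `1`.
-/

open Matrix

variable (R : Type*) [CommRing R]

def shiftedPascal (r j : ℕ) : Matrix (Fin r) (Fin r) R :=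
  of fun k l => (Nat.choose (j + l) k : R)

def subdiagonalOnes (r : ℕ) : Matrix (Fin r) (Fin r) R :=
  of fun k k' => if (k : ℕ) = k' + 1 then 1 else 0

variable {R}

theorem det_shiftedPascal_zero (r : ℕ) : (shiftedPascal R r 0).det = 1 := by
  rw [det_of_isUpperTriangular]
  · simp [shiftedPascal]
  · intro k l (hlk : l < k)
    simp [shiftedPascal, Nat.choose_eq_zero_of_lt hlk]

theorem det_one_add_subdiagonalOnes (r : ℕ) : (1 + subdiagonalOnes R r).det = 1 := by
  rw [det_of_isLowerTriangular]
  · simp [subdiagonalOnes]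
  · intro k k' (hkk' : k < k')
    have hnot_sub : (k : ℕ) ≠ k' + 1 := by have : (k : ℕ) < k' := hkk'; omega
    simp [subdiagonalOnes, hkk'.ne, hnot_sub]

theorem shiftedPascal_succ (r j : ℕ) :
    shiftedPascal R r (j + 1) = (1 + subdiagonalOnes R r) * shiftedPascal R r j := by
  ext ⟨k, hk⟩ l
  rw [add_mul, one_mul, Matrix.add_apply]
  cases k with
  | zero => simp [shiftedPascal, subdiagonalOnes, mul_apply]
  | succ m =>
    have hrow : ∀ k' : Fin r, m = k' ↔ k' = ⟨m, by omega⟩ := fun k' => by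
      simp [Fin.ext_iff, eq_comm]
    simp [shiftedPascal, subdiagonalOnes, mul_apply, hrow, add_right_comm j 1,
      Nat.choose_succ_succ', add_comm]

theorem det_shiftedPascal (r j : ℕ) : (shiftedPascal R r j).det = 1 := by
  induction j with
  | zero => exact det_shiftedPascal_zero r
  | succ j ih => rw [shiftedPascal_succ, det_mul, ih, det_one_add_subdiagonalOnes, one_mul]

/-- Every shifted leading minor of the integer Pascal matrix with entries
`C(j-1, i-1)` equals 1: for any `r ≥ 1` and `j ≥ 0`, the determinant of the
matrix with entries `C(j+l-1, k-1)` for `1 ≤ k, l ≤ r` (here 0-indexed as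
`C(j+l, k)` for `k, l : Fin r`) equals 1. -/
theorem pascal_shifted_minor_int (r j : ℕ) :
    (Matrix.det (fun k l : Fin r => (Nat.choose (j + l.val) k.val : ℤ))) = 1 :=
  det_shiftedPascal (R := ℤ) r j
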